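/- Every K-bilinear space embeds (via a bilinear monomorphism) into a non-degenerate K-bilinear space. -/

import Mathlib

/-!
Put `B` on top of the hyperbolic form of `V`: on `V^* × V` take
`((φ, v), (ψ, w)) ↦ φ w + ψ v + B v w`, into which `V` embeds isometrically as `0 × V`.
If `(φ, v)` is orthogonal to everything, pairing it with `(ψ, 0)` gives `ψ v = 0` for every `ψ`,
so `v = 0`; pairing it with `(0, w)` then gives `φ w = 0`, so `φ = 0`. The form for `B.flip` is
the flip of the form for `B`, so the same argument separates on the right.
-/


namespace LinearMap

open Module

variable {R M : Type*} [CommRing R] [AddCommGroup M] [Module R M]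

def dualProdExtension (B : M →ₗ[R] M →ₗ[R] R) : LinearMap.BilinForm R (Dual R M × M) :=
  dualProd R M + B.compl₁₂ (snd R (Dual R M) M) (snd R (Dual R M) M)

@[simp]
theorem dualProdExtension_apply (B : M →ₗ[R] M →ₗ[R] R) (x y : Dual R M × M) :
    B.dualProdExtension x y = x.1 y.2 + y.1 x.2 + B x.2 y.2 := by
  simp only [dualProdExtension, add_apply, dualProd_apply_apply, compl₁₂_apply, snd_apply,
    add_left_inj]
  ring

theorem dualProdExtension_inr_inr (B : M →ₗ[R] M →ₗ[R] R) (v w : M) :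
    B.dualProdExtension (inr R (Dual R M) M v) (inr R (Dual R M) M w) = B v w := by
  simp

theorem flip_dualProdExtension (B : M →ₗ[R] M →ₗ[R] R) :
    LinearMap.flip B.dualProdExtension = B.flip.dualProdExtension :=
  ext₂ fun x y => by simp only [flip_apply, dualProdExtension_apply]; ring

theorem separatingLeft_dualProdExtension [Projective R M] (B : M →ₗ[R] M →ₗ[R] R) :
    B.dualProdExtension.SeparatingLeft := by
  rintro ⟨φ, v⟩ h
  have hv : v = 0 := (forall_dual_apply_eq_zero_iff R v).mp fun ψ => by
    simpa using h (ψ, 0)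
  subst hv
  have hφ : φ = 0 := ext fun w => by simpa using h (0, w)
  rw [hφ, Prod.mk_zero_zero]

theorem nondegenerate_dualProdExtension [Projective R M] (B : M →ₗ[R] M →ₗ[R] R) :
    B.dualProdExtension.Nondegenerate :=
  ⟨B.separatingLeft_dualProdExtension, by
    rw [← flip_separatingLeft, flip_dualProdExtension]
    exact B.flip.separatingLeft_dualProdExtension⟩

end LinearMap

theorem embeds_into_nondegenerate {K : Type u} [Field K]
    (V : Type u) [AddCommGroup V] [Module K V] (BV : V →ₗ[K] V →ₗ[K] K) :
    ∃ (W : Type u) (_ : AddCommGroup W) (_ : Module K W)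
      (BW : W →ₗ[K] W →ₗ[K] K) (f : V →ₗ[K] W),
      Function.Injective f ∧ (∀ x y : V, BW (f x) (f y) = BV x y) ∧
      (∀ x : W, (∀ y : W, BW x y = 0) → x = 0) ∧
      (∀ y : W, (∀ x : W, BW x y = 0) → y = 0) :=
  ⟨Module.Dual K V × V, inferInstance, inferInstance, BV.dualProdExtension,
    LinearMap.inr K _ _, LinearMap.inr_injective, BV.dualProdExtension_inr_inr,
    BV.nondegenerate_dualProdExtension.1, BV.nondegenerate_dualProdExtension.2⟩
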